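/- arXiv:2107.09464 — 3 statements merged into one kernel-verified Lean document; each statement's English description precedes it below -/
import Mathlib

section
/- Shape derivative of a domain integral (transport theorem for perturbation of identity): for a smooth family of scalar functions p(ε) on Ω_ε = φ_ε(Ω), d/dε (∫_{Ω_ε} p(ε) dx)|_{ε=0⁺} = ∫_Ω (D_m p + (div V) p) dx. -/
set_option maxHeartbeats 1000000
open Set MeasureTheory

section AuxShape
variable {n : ℕ}

lemma aux_contDiff_det (m : ℕ) :
    ContDiff ℝ (⊤ : ℕ∞) (fun M : Fin m → Fin m → ℝ => Matrix.det (Matrix.of M)) := by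
  have h : (fun M : Fin m → Fin m → ℝ => Matrix.det (Matrix.of M))
      = fun M => ∑ σ : Equiv.Perm (Fin m),
          ((Equiv.Perm.sign σ : ℤ) : ℝ) * ∏ i, M (σ i) i := by
    funext M
    simp [Matrix.det_apply, Units.smul_def, zsmul_eq_mul]
  rw [h]
  exact ContDiff.sum fun σ _ => contDiff_const.mul
    (contDiff_prod fun i _ => contDiff_apply_apply (𝕜 := ℝ) (E := ℝ) (σ i) i)

lemma aux_hasDerivAt_det (m : ℕ) (M : Matrix (Fin m) (Fin m) ℝ) :
    HasDerivAt (fun ε : ℝ => (1 + ε • M).det) (Matrix.trace M) 0 := by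
  have h : (fun ε : ℝ => (1 + ε • M).det)
      = fun ε => 1 + Matrix.trace M * ε
          + (Matrix.det (1 + (Polynomial.X : Polynomial ℝ) • M.map Polynomial.C)).divX.divX.eval ε * ε ^ 2 := by
    funext ε; exact Matrix.det_one_add_smul ε M
  rw [h]
  have h1 : HasDerivAt (fun ε : ℝ => 1 + Matrix.trace M * ε) (Matrix.trace M) 0 := by
    simpa using (hasDerivAt_id (0:ℝ)).const_mul (Matrix.trace M) |>.const_add 1
  have h2 : HasDerivAt (fun ε : ℝ =>
      (Matrix.det (1 + (Polynomial.X : Polynomial ℝ) • M.map Polynomial.C)).divX.divX.eval ε * ε ^ 2) 0 0 := by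
    have := (Polynomial.hasDerivAt (Matrix.det (1 + (Polynomial.X : Polynomial ℝ) • M.map Polynomial.C)).divX.divX (0:ℝ)).mul (hasDerivAt_pow 2 (0:ℝ))
    exact this.congr_deriv (by simp)
  exact (h1.add h2).congr_deriv (by simp)

variable {n : ℕ}

noncomputable def Amat {n : ℕ} (V : EuclideanSpace ℝ (Fin n) → EuclideanSpace ℝ (Fin n))
    (x : EuclideanSpace ℝ (Fin n)) : Matrix (Fin n) (Fin n) ℝ :=
  LinearMap.toMatrix (EuclideanSpace.basisFun (Fin n) ℝ).toBasis
    (EuclideanSpace.basisFun (Fin n) ℝ).toBasis (fderiv ℝ V x)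

lemma Amat_entry (V : EuclideanSpace ℝ (Fin n) → EuclideanSpace ℝ (Fin n)) (x) (i j : Fin n) :
    Amat V x i j = fderiv ℝ V x ((EuclideanSpace.basisFun (Fin n) ℝ).toBasis j) i := by
  simp [Amat, LinearMap.toMatrix_apply]

lemma Amat_contDiff_entry {V : EuclideanSpace ℝ (Fin n) → EuclideanSpace ℝ (Fin n)}
    (hV : ContDiff ℝ (⊤ : ℕ∞) V) (i j : Fin n) :
    ContDiff ℝ (⊤ : ℕ∞) fun x => Amat V x i j := by
  simp only [Amat_entry]
  exact contDiff_euclidean.1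
    (((hV.fderiv_right (le_refl _)).clm_apply contDiff_const)) i

lemma Amat_zero {V : EuclideanSpace ℝ (Fin n) → EuclideanSpace ℝ (Fin n)} {x}
    (h : fderiv ℝ V x = 0) : Amat V x = 0 := by
  simp [Amat, h]

lemma aux_det_CLM {V : EuclideanSpace ℝ (Fin n) → EuclideanSpace ℝ (Fin n)} {x} (ε : ℝ) :
    (ContinuousLinearMap.id ℝ (EuclideanSpace ℝ (Fin n)) + ε • fderiv ℝ V x).det
      = (1 + ε • Amat V x).det := by
  rw [ContinuousLinearMap.det]
  rw [← LinearMap.det_toMatrix (EuclideanSpace.basisFun (Fin n) ℝ).toBasis]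
  congr 1
  simp only [ContinuousLinearMap.coe_add, ContinuousLinearMap.coe_smul, _root_.map_add,
    _root_.map_smul, ContinuousLinearMap.coe_id, LinearMap.toMatrix_id]
  rfl

lemma aux_trace (V : EuclideanSpace ℝ (Fin n) → EuclideanSpace ℝ (Fin n)) (x) :
    LinearMap.trace ℝ (EuclideanSpace ℝ (Fin n)) (fderiv ℝ V x) = Matrix.trace (Amat V x) := by
  rw [LinearMap.trace_eq_matrix_trace ℝ (EuclideanSpace.basisFun (Fin n) ℝ).toBasis]
  rfl

lemma aux_detpart_contDiff {V : EuclideanSpace ℝ (Fin n) → EuclideanSpace ℝ (Fin n)}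
    (hV : ContDiff ℝ (⊤ : ℕ∞) V) :
    ContDiff ℝ (⊤ : ℕ∞) fun q : ℝ × EuclideanSpace ℝ (Fin n) => (1 + q.1 • Amat V q.2).det := by
  have h : (fun q : ℝ × EuclideanSpace ℝ (Fin n) => (1 + q.1 • Amat V q.2).det)
      = (fun M : Fin n → Fin n → ℝ => Matrix.det (Matrix.of M)) ∘
        (fun q : ℝ × EuclideanSpace ℝ (Fin n) => fun i j => (1 + q.1 • Amat V q.2) i j) := by
    funext q
    simp only [Function.comp_apply]
    congr 1
  rw [h]
  refine (aux_contDiff_det n).comp ?_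
  refine contDiff_pi.2 fun i => contDiff_pi.2 fun j => ?_
  have : (fun q : ℝ × EuclideanSpace ℝ (Fin n) => (1 + q.1 • Amat V q.2) i j)
      = fun q => (1 : Matrix (Fin n) (Fin n) ℝ) i j + q.1 * Amat V q.2 i j := by
    funext q
    simp [Matrix.add_apply]
  rw [this]
  exact contDiff_const.add (contDiff_fst.mul ((Amat_contDiff_entry hV i j).comp contDiff_snd))

lemma aux_inj {V : EuclideanSpace ℝ (Fin n) → EuclideanSpace ℝ (Fin n)}
    (hV : ContDiff ℝ (⊤ : ℕ∞) V) (hVc : HasCompactSupport V) :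
    ∃ δ > (0:ℝ), ∀ ε ∈ Ico (0:ℝ) δ, Function.Injective
      (fun x : EuclideanSpace ℝ (Fin n) => x + ε • V x) := by
  obtain ⟨K, hK⟩ := hV.lipschitzWith_of_hasCompactSupport hVc (by simp)
  refine ⟨1 / ((K:ℝ) + 1), by positivity, fun ε hε x y hxy => ?_⟩
  simp only at hxy
  have hsub : x - y = ε • (V y - V x) := by
    rw [smul_sub]
    rw [← sub_eq_zero] at hxy ⊢
    rw [← hxy]
    abel
  by_contra hne
  have hpos : 0 < ‖x - y‖ := by
    simpa [sub_eq_zero] using norm_pos_iff.2 (sub_ne_zero.2 hne)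
  have hnorm : ‖x - y‖ ≤ ε * ((K:ℝ) * ‖x - y‖) := by
    calc ‖x - y‖ = ‖ε • (V y - V x)‖ := by rw [hsub]
    _ = |ε| * ‖V y - V x‖ := by rw [norm_smul, Real.norm_eq_abs]
    _ = ε * ‖V y - V x‖ := by rw [abs_of_nonneg hε.1]
    _ ≤ ε * ((K:ℝ) * ‖y - x‖) := by
        have := hK.norm_sub_le y x
        exact mul_le_mul_of_nonneg_left (by simpa [dist_eq_norm] using this) hε.1
    _ = ε * ((K:ℝ) * ‖x - y‖) := by rw [norm_sub_rev]
  have hεK : ε * (K:ℝ) < 1 := by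
    have h1 : ε < 1 / ((K:ℝ) + 1) := hε.2
    have hK0 : (0:ℝ) ≤ (K:ℝ) := K.coe_nonneg
    have hε0 : (0:ℝ) ≤ ε := hε.1
    have h2 : ε * ((K:ℝ) + 1) < 1 := by
      have := (lt_div_iff₀ (show (0:ℝ) < (K:ℝ)+1 by positivity)).1 h1
      linarith
    nlinarith
  nlinarith


lemma aux_pos {V : EuclideanSpace ℝ (Fin n) → EuclideanSpace ℝ (Fin n)}
    (hV : ContDiff ℝ (⊤ : ℕ∞) V) (hVc : HasCompactSupport V) :
    ∃ δ > (0:ℝ), ∀ ε : ℝ, |ε| < δ → ∀ x, 0 < (1 + ε • Amat V x).det := by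
  have dcont : Continuous fun q : ℝ × EuclideanSpace ℝ (Fin n) => (1 + q.1 • Amat V q.2).det :=
    (aux_detpart_contDiff hV).continuous
  set u := (fun q : ℝ × EuclideanSpace ℝ (Fin n) => (1 + q.1 • Amat V q.2).det) ⁻¹' Ioi 0 with hu
  have hu_open : IsOpen u := dcont.isOpen_preimage _ isOpen_Ioi
  have hsub : ({0} : Set ℝ) ×ˢ tsupport V ⊆ u := by
    rintro ⟨ε, x⟩ ⟨hε, -⟩
    simp only [mem_singleton_iff] at hε
    simp [hu, hε]
  obtain ⟨v, w, hv_open, hw_open, hv0, hwS, hvw⟩ :=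
    generalized_tube_lemma isCompact_singleton hVc hu_open hsub
  obtain ⟨δ, hδpos, hball⟩ := Metric.isOpen_iff.1 hv_open 0 (hv0 rfl)
  refine ⟨δ, hδpos, fun ε hε x => ?_⟩
  by_cases hx : x ∈ tsupport V
  · have : (ε, x) ∈ u := hvw ⟨hball (by simpa [Real.dist_eq] using hε), hwS hx⟩
    simpa [hu] using this
  · have hfd : fderiv ℝ V x = 0 := by
      by_contra h
      exact hx (support_fderiv_subset ℝ (Function.mem_support.2 h))
    rw [Amat_zero hfd]
    simp

end AuxShape


/-- transport theorem for the perturbation of identity: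
`d/dε (∫_{Ω_ε} p(ε) dx)|_{ε=0⁺} = ∫_Ω (D_m p + (div V) p) dx`, where
`Ω_ε = (id + εV)(Ω)`, `D_m p(x)` is the one-sided derivative of
`ε ↦ p(ε)(x + εV(x))` at `0`, and `div V = tr(∇V)`. -/
theorem shape_derivative_of_domain_integral
    {n : ℕ} (Ω : Set (EuclideanSpace ℝ (Fin n)))
    (hΩo : IsOpen Ω) (hΩb : Bornology.IsBounded Ω)
    (V : EuclideanSpace ℝ (Fin n) → EuclideanSpace ℝ (Fin n))
    (hV : ContDiff ℝ (⊤ : ℕ∞) V) (hVc : HasCompactSupport V)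
    (p : ℝ → EuclideanSpace ℝ (Fin n) → ℝ)
    (hps : ContDiff ℝ (⊤ : ℕ∞) (fun q : ℝ × EuclideanSpace ℝ (Fin n) => p q.1 q.2)) :
    HasDerivWithinAt
      (fun ε : ℝ => ∫ y in (fun x => x + ε • V x) '' Ω, p ε y)
      (∫ x in Ω,
        (derivWithin (fun ε : ℝ => p ε (x + ε • V x)) (Ici 0) 0
          + (LinearMap.trace ℝ (EuclideanSpace ℝ (Fin n))) (fderiv ℝ V x) * p 0 x))
      (Ici 0) 0 := by
  set G : ℝ → EuclideanSpace ℝ (Fin n) → ℝ := fun ε x => (1 + ε • Amat V x).det * p ε (x + ε • V x) with hG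
  set Gu : ℝ × EuclideanSpace ℝ (Fin n) → ℝ := fun q => G q.1 q.2 with hGu_def
  have hPu : ContDiff ℝ (⊤ : ℕ∞) fun q : ℝ × EuclideanSpace ℝ (Fin n) => p q.1 (q.2 + q.1 • V q.2) := by
    exact hps.comp (contDiff_fst.prodMk (contDiff_snd.add (contDiff_fst.smul (hV.comp contDiff_snd))))
  have hGu : ContDiff ℝ (⊤ : ℕ∞) Gu := by rw [hGu_def, hG]; exact (aux_detpart_contDiff hV).mul hPu
  set H : ℝ → EuclideanSpace ℝ (Fin n) → ℝ := fun ε x => fderiv ℝ Gu (ε, x) (1, 0) with hH_def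
  have hHu_cont : Continuous fun q : ℝ × EuclideanSpace ℝ (Fin n) => fderiv ℝ Gu q (1, 0) :=
    (hGu.continuous_fderiv (by simp)).clm_apply continuous_const
  have hHd : ∀ (ε : ℝ) (x : EuclideanSpace ℝ (Fin n)), HasDerivAt (fun t => G t x) (H ε x) ε := by
    intro ε x
    have h1 : HasFDerivAt Gu (fderiv ℝ Gu (ε, x)) (ε, x) :=
      ((hGu.differentiable (by simp)) (ε, x)).hasFDerivAt
    have h2 : HasDerivAt (fun t : ℝ => ((t, x) : ℝ × EuclideanSpace ℝ (Fin n))) ((1:ℝ), (0:EuclideanSpace ℝ (Fin n))) ε :=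
      (hasDerivAt_id ε).prodMk (hasDerivAt_const ε x)
    exact h1.comp_hasDerivAt ε h2
  -- dominated differentiation
  obtain ⟨C, hC⟩ := ((isCompact_Icc (a := (-1:ℝ)) (b := 1)).prod hΩb.isCompact_closure).exists_bound_of_continuousOn
    (s := Icc (-1:ℝ) 1 ×ˢ closure Ω) hHu_cont.continuousOn
  have key := hasDerivAt_integral_of_dominated_loc_of_deriv_le (μ := volume.restrict Ω)
    (x₀ := (0:ℝ)) (F := G) (F' := H) (bound := fun _ => C) (Metric.ball_mem_nhds (0:ℝ) one_pos)
    (Filter.Eventually.of_forall fun ε =>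
      (hGu.continuous.comp (Continuous.prodMk_right ε)).aestronglyMeasurable)
    ((((hGu.continuous.comp (Continuous.prodMk_right (0:ℝ))).continuousOn.integrableOn_compact
        hΩb.isCompact_closure).mono_set subset_closure))
    ((hHu_cont.comp (Continuous.prodMk_right (0:ℝ))).aestronglyMeasurable)
    ?_ ?_ ?_
  · obtain ⟨-, hasD⟩ := key
    -- identify the derivative integrand
    have hptwise : ∀ x : EuclideanSpace ℝ (Fin n),
        derivWithin (fun ε : ℝ => p ε (x + ε • V x)) (Ici 0) 0
          + (LinearMap.trace ℝ (EuclideanSpace ℝ (Fin n))) (fderiv ℝ V x) * p 0 x = H 0 x := by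
      intro x
      have hcur : ContDiff ℝ (⊤ : ℕ∞) fun t : ℝ => p t (x + t • V x) :=
        hPu.comp (contDiff_id.prodMk contDiff_const)
      have hPd : HasDerivAt (fun t : ℝ => p t (x + t • V x))
          (deriv (fun t : ℝ => p t (x + t • V x)) 0) 0 :=
        ((hcur.differentiable (by simp)) 0).hasDerivAt
      have hdet := aux_hasDerivAt_det n (Amat V x)
      have hmul := hdet.mul hPd
      have hval : H 0 x = Matrix.trace (Amat V x) * p 0 (x + (0:ℝ) • V x)
          + (1 + (0:ℝ) • Amat V x).det * deriv (fun t : ℝ => p t (x + t • V x)) 0 :=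
        (hHd 0 x).unique hmul
      have hdw : derivWithin (fun ε : ℝ => p ε (x + ε • V x)) (Ici 0) 0
          = deriv (fun t : ℝ => p t (x + t • V x)) 0 :=
        hPd.hasDerivWithinAt.derivWithin (uniqueDiffOn_Ici 0 0 self_mem_Ici)
      rw [hdw, hval, aux_trace]
      simp
      ring
    have hint_eq : (∫ x in Ω,
        (derivWithin (fun ε : ℝ => p ε (x + ε • V x)) (Ici 0) 0
          + (LinearMap.trace ℝ (EuclideanSpace ℝ (Fin n))) (fderiv ℝ V x) * p 0 x))
        = ∫ x in Ω, H 0 x := integral_congr_ae (ae_of_all _ hptwise)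
    rw [hint_eq]
    -- eventual equality of the two functions on [0, δ)
    obtain ⟨δ₁, hδ₁, hinj⟩ := aux_inj hV hVc
    obtain ⟨δ₂, hδ₂, hpos⟩ := aux_pos hV hVc
    set δ := min δ₁ δ₂ with hδ
    have hδpos : 0 < δ := lt_min hδ₁ hδ₂
    have hEq : ∀ ε ∈ Ico (0:ℝ) δ,
        (∫ y in (fun x => x + ε • V x) '' Ω, p ε y) = ∫ x in Ω, G ε x := by
      intro ε hε
      have hf' : ∀ x ∈ Ω, HasFDerivWithinAt (fun x => x + ε • V x)
          (ContinuousLinearMap.id ℝ (EuclideanSpace ℝ (Fin n)) + ε • fderiv ℝ V x) Ω x := fun x _ =>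
        ((hasFDerivAt_id x).add (((hV.differentiable (by simp)) x).hasFDerivAt.const_smul ε)).hasFDerivWithinAt
      rw [integral_image_eq_integral_abs_det_fderiv_smul volume hΩo.measurableSet hf'
        (hinj ε ⟨hε.1, lt_of_lt_of_le hε.2 (min_le_left _ _)⟩).injOn (p ε)]
      refine integral_congr_ae (ae_of_all _ fun x => ?_)
      have habs : |(ContinuousLinearMap.id ℝ (EuclideanSpace ℝ (Fin n)) + ε • fderiv ℝ V x).det|
          = (1 + ε • Amat V x).det := by
        rw [aux_det_CLM ε]
        exact abs_of_pos (hpos ε (by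
          rw [abs_of_nonneg hε.1]; exact lt_of_lt_of_le hε.2 (min_le_right _ _)) x)
      simp only [smul_eq_mul, hG]
      rw [habs]
    refine HasDerivWithinAt.congr_of_eventuallyEq (hasD.hasDerivWithinAt) ?_ ?_
    · exact Filter.eventuallyEq_of_mem (Ico_mem_nhdsGE_of_mem (left_mem_Ico.2 hδpos))
        (fun ε hε => hEq ε hε)
    · exact hEq 0 (left_mem_Ico.2 hδpos)
  · -- bound
    filter_upwards [ae_restrict_mem hΩo.measurableSet] with x hx
    intro ε hε
    have : (ε, x) ∈ Icc (-1:ℝ) 1 ×ˢ closure Ω := by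
      constructor
      · have : |ε| < 1 := by simpa [Real.dist_eq] using hε
        exact ⟨by linarith [abs_le.1 this.le |>.1], by linarith [abs_le.1 this.le |>.2]⟩
      · exact subset_closure hx
    exact hC (ε, x) this
  · exact integrableOn_const hΩb.measure_lt_top.ne
  · exact Filter.Eventually.of_forall fun x ε _ => hHd ε x
end

section
/- The map ε ↦ vol(φ_ε(Ω)) with φ_ε = id + εV is differentiable at ε=0 whenever V is C¹ with bounded derivative on bounded Ω, with derivative ∫_Ω tr(∇V) dx. -/
open Set MeasureTheory

section DetAux

variable {E : Type*} [NormedAddCommGroup E] [NormedSpace ℝ E] [FiniteDimensional ℝ E]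

lemma clm_det_contDiff : ContDiff ℝ (⊤ : ℕ∞) (fun f : E →L[ℝ] E => f.det) := by
  classical
  set b := Module.finBasis ℝ E with hb
  have h : (fun f : E →L[ℝ] E => f.det)
      = fun f : E →L[ℝ] E => ∑ σ : Equiv.Perm (Fin (Module.finrank ℝ E)),
          ((Equiv.Perm.sign σ : ℤ) : ℝ) *
            ∏ i, LinearMap.toMatrix b b (↑f : E →ₗ[ℝ] E) (σ i) i := by
    funext f
    rw [ContinuousLinearMap.det, ← LinearMap.det_toMatrix b, Matrix.det_apply']
  rw [h]
  apply ContDiff.sum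
  intro σ _
  apply contDiff_const.mul
  apply contDiff_prod
  intro i _
  let L : (E →L[ℝ] E) →ₗ[ℝ] ℝ :=
    { toFun := fun f : E →L[ℝ] E => LinearMap.toMatrix b b (↑f : E →ₗ[ℝ] E) (σ i) i
      map_add' := by intro f g; simp
      map_smul' := by intro c f; simp }
  exact (LinearMap.toContinuousLinearMap L).contDiff

end DetAux

section DetAux2

variable {E : Type*} [NormedAddCommGroup E] [NormedSpace ℝ E] [FiniteDimensional ℝ E]

lemma clm_hasDerivAt_det_one_add_smul (B : E →L[ℝ] E) :
    HasDerivAt (fun t : ℝ => (1 + t • B : E →L[ℝ] E).det)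
      (LinearMap.trace ℝ E (↑B : E →ₗ[ℝ] E)) 0 := by
  classical
  set b := Module.finBasis ℝ E with hb
  set M := LinearMap.toMatrix b b (↑B : E →ₗ[ℝ] E) with hM
  set P := (Matrix.det (1 + (Polynomial.X : Polynomial ℝ) • M.map Polynomial.C)).divX.divX
    with hP
  have key : ∀ t : ℝ, (1 + t • B : E →L[ℝ] E).det
      = 1 + LinearMap.trace ℝ E (↑B : E →ₗ[ℝ] E) * t + P.eval t * t ^ 2 := by
    intro t
    have h1 : ((1 + t • B : E →L[ℝ] E) : E →ₗ[ℝ] E)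
        = (1 : E →ₗ[ℝ] E) + t • (↑B : E →ₗ[ℝ] E) := by
      ext x; simp
    rw [ContinuousLinearMap.det, h1, ← LinearMap.det_toMatrix b, map_add, _root_.map_smul,
      LinearMap.toMatrix_one, ← hM, Matrix.det_one_add_smul, ← hP,
      LinearMap.trace_eq_matrix_trace ℝ b, ← hM]
  simp only [key]
  have h₁ : HasDerivAt (fun t : ℝ => LinearMap.trace ℝ E (↑B : E →ₗ[ℝ] E) * t)
      (LinearMap.trace ℝ E (↑B : E →ₗ[ℝ] E)) 0 := by
    simpa using (hasDerivAt_id (0 : ℝ)).const_mul (LinearMap.trace ℝ E (↑B : E →ₗ[ℝ] E))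
  have h₂ : HasDerivAt (fun t : ℝ => P.eval t * t ^ 2) 0 0 := by
    exact (show HasDerivAt (fun t : ℝ => P.eval t * t ^ 2) _ 0 from
      (P.hasDerivAt (0 : ℝ)).mul (hasDerivAt_pow 2 (0 : ℝ))).congr_deriv (by simp)
  exact (show HasDerivAt (fun t : ℝ =>
    1 + LinearMap.trace ℝ E (↑B : E →ₗ[ℝ] E) * t + P.eval t * t ^ 2) _ 0 from
    (h₁.const_add 1).add h₂).congr_deriv (by simp)

lemma clm_det_pos {B : E →L[ℝ] E} (h : ‖B‖ < 1) : 0 < (1 + B : E →L[ℝ] E).det := by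
  have hcont : Continuous fun t : ℝ => (1 + t • B : E →L[ℝ] E).det :=
    ContinuousLinearMap.continuous_det.comp (by continuity)
  have hne : ∀ t ∈ Icc (0 : ℝ) 1, (1 + t • B : E →L[ℝ] E).det ≠ 0 := by
    intro t ht
    have hts : ‖t • B‖ = |t| * ‖B‖ := by
      have := norm_smul t B
      rwa [Real.norm_eq_abs] at this
    have hnorm : ‖-(t • B)‖ < 1 := by
      rw [norm_neg, hts, abs_of_nonneg ht.1]
      nlinarith [norm_nonneg B, ht.1, ht.2]
    have hu : IsUnit (1 + t • B : E →L[ℝ] E) := by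
      have h2 := (Units.oneSub (-(t • B)) hnorm).isUnit
      simpa [Units.oneSub, sub_neg_eq_add] using h2
    rcases hu with ⟨u, hu⟩
    have hmul : (u.val * ↑u⁻¹ : E →L[ℝ] E).det = 1 := by
      rw [u.mul_inv]
      simp [ContinuousLinearMap.det, ContinuousLinearMap.one_def]
    have hdetmul : (u.val : E →L[ℝ] E).det * ((↑u⁻¹ : E →L[ℝ] E)).det
        = (u.val * ↑u⁻¹ : E →L[ℝ] E).det := by
      simp only [ContinuousLinearMap.det, ContinuousLinearMap.coe_mul]
      exact (map_mul LinearMap.det _ _).symm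
    intro h0
    have hne0 : (u.val : E →L[ℝ] E).det ≠ 0 :=
      left_ne_zero_of_mul_eq_one (hdetmul.trans hmul)
    rw [hu] at hne0
    exact hne0 h0
  by_contra hle
  push_neg at hle
  have h0 : (1 + (0 : ℝ) • B : E →L[ℝ] E).det = 1 := by
    simp [ContinuousLinearMap.det, ContinuousLinearMap.one_def]
  have h1ne : (1 + (1 : ℝ) • B : E →L[ℝ] E).det ≠ 0 := hne 1 (by norm_num)
  have hlt : (1 + (1 : ℝ) • B : E →L[ℝ] E).det < 0 :=
    lt_of_le_of_ne (by simpa [one_smul] using hle) h1ne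
  have hiv := intermediate_value_Icc' (zero_le_one (α := ℝ)) hcont.continuousOn
  have hmem : (0 : ℝ) ∈ Icc ((fun t : ℝ => (1 + t • B : E →L[ℝ] E).det) 1)
      ((fun t : ℝ => (1 + t • B : E →L[ℝ] E).det) 0) := by
    simp only
    constructor
    · exact hlt.le
    · rw [h0]; exact zero_le_one
  obtain ⟨t, htmem, hft⟩ := hiv hmem
  exact hne t htmem hft

end DetAux2


section DetAux3

variable {E : Type*} [NormedAddCommGroup E] [NormedSpace ℝ E] [FiniteDimensional ℝ E]

lemma clm_hasDerivAt_det_param (B : E →L[ℝ] E) (ε : ℝ) :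
    HasDerivAt (fun t : ℝ => (1 + t • B : E →L[ℝ] E).det)
      (fderiv ℝ (fun f : E →L[ℝ] E => f.det) (1 + ε • B) B) ε := by
  have hg : HasDerivAt (fun t : ℝ => (1 : E →L[ℝ] E) + t • B) B ε := by
    simpa using ((hasDerivAt_id ε).smul_const B).const_add (1 : E →L[ℝ] E)
  have hdet : HasFDerivAt (fun f : E →L[ℝ] E => f.det)
      (fderiv ℝ (fun f : E →L[ℝ] E => f.det) (1 + ε • B)) (1 + ε • B) :=
    (clm_det_contDiff.differentiable (by simp) (1 + ε • B)).hasFDerivAt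
  exact hdet.comp_hasDerivAt ε hg

lemma clm_fderiv_det_one (B : E →L[ℝ] E) :
    fderiv ℝ (fun f : E →L[ℝ] E => f.det) 1 B = LinearMap.trace ℝ E (↑B : E →ₗ[ℝ] E) := by
  have h := clm_hasDerivAt_det_param B 0
  rw [zero_smul, add_zero] at h
  exact h.unique (clm_hasDerivAt_det_one_add_smul B)

end DetAux3

/-- the map `ε ↦ vol(φ_ε(Ω))` with `φ_ε = id + εV` is differentiable at
`ε = 0` whenever `V` is `C¹` with bounded derivative and `Ω` is bounded, with
derivative `∫_Ω tr(∇V) dx`. -/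
theorem volume_of_deformed_domain_hasDerivAt
    {n : ℕ} (Ω : Set (EuclideanSpace ℝ (Fin n)))
    (hΩo : IsOpen Ω) (hΩb : Bornology.IsBounded Ω)
    (V : EuclideanSpace ℝ (Fin n) → EuclideanSpace ℝ (Fin n))
    (hV : ContDiff ℝ 1 V) (C : ℝ) (hVb : ∀ x, ‖fderiv ℝ V x‖ ≤ C) :
    HasDerivAt (fun ε : ℝ => (volume ((fun x => x + ε • V x) '' Ω)).toReal)
      (∫ x in Ω, (LinearMap.trace ℝ (EuclideanSpace ℝ (Fin n))) (fderiv ℝ V x)) 0 := by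
  classical
  have hC0 : 0 ≤ C := le_trans (norm_nonneg _) (hVb 0)
  have hVd : Differentiable ℝ V := hV.differentiable one_ne_zero
  set A : EuclideanSpace ℝ (Fin n) →
      (EuclideanSpace ℝ (Fin n) →L[ℝ] EuclideanSpace ℝ (Fin n)) :=
    fun x => fderiv ℝ V x with hA
  have hAcont : Continuous A := hV.continuous_fderiv one_ne_zero
  -- V is Lipschitz with constant C
  have hlip : LipschitzWith (Real.toNNReal C) V := by
    apply lipschitzWith_of_nnnorm_fderiv_le hVd
    intro x
    rw [← NNReal.coe_le_coe, coe_nnnorm, Real.coe_toNNReal C hC0]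
    exact hVb x
  set δ : ℝ := (2 * (C + 1))⁻¹ with hδ
  have hδpos : 0 < δ := by positivity
  have hδC : δ * C < 1 := by
    rw [hδ]
    rw [inv_mul_lt_iff₀ (by positivity)]
    nlinarith
  -- small perturbation bound
  have hkey : ∀ ε : ℝ, |ε| ≤ δ → ∀ x, ‖ε • A x‖ < 1 := by
    intro ε hε x
    have h1 : ‖ε • A x‖ = |ε| * ‖A x‖ := by
      have := norm_smul ε (A x); rwa [Real.norm_eq_abs] at this
    rw [h1]
    calc |ε| * ‖A x‖ ≤ δ * C :=
          mul_le_mul hε (hVb x) (norm_nonneg _) hδpos.le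
      _ < 1 := hδC
  -- injectivity of the deformation
  have hinj : ∀ ε : ℝ, |ε| ≤ δ → Function.Injective fun x => x + ε • V x := by
    intro ε hε x y hxy
    simp only at hxy
    have hd : x - y = ε • V y - ε • V x :=
      sub_eq_sub_iff_add_eq_add.mpr (by rw [hxy]; abel)
    have h2 : ‖x - y‖ ≤ |ε| * (C * ‖y - x‖) := by
      rw [hd, ← smul_sub]
      have h3 : ‖ε • (V y - V x)‖ = |ε| * ‖V y - V x‖ := by
        have := norm_smul ε (V y - V x); rwa [Real.norm_eq_abs] at this
      rw [h3]
      apply mul_le_mul_of_nonneg_left _ (abs_nonneg ε)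
      have := hlip.dist_le_mul y x
      rwa [dist_eq_norm, dist_eq_norm, Real.coe_toNNReal C hC0] at this
    have h4 : ‖y - x‖ = ‖x - y‖ := norm_sub_rev y x
    have h6 : ‖x - y‖ ≤ (δ * C) * ‖x - y‖ := by
      rw [h4] at h2
      calc ‖x - y‖ ≤ |ε| * (C * ‖x - y‖) := h2
        _ = (|ε| * C) * ‖x - y‖ := by ring
        _ ≤ (δ * C) * ‖x - y‖ := by
            apply mul_le_mul_of_nonneg_right _ (norm_nonneg _)
            exact mul_le_mul_of_nonneg_right hε hC0
    have h5 : ‖x - y‖ = 0 :=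
      le_antisymm (by nlinarith [norm_nonneg (x - y)]) (norm_nonneg _)
    exact sub_eq_zero.1 (norm_eq_zero.1 h5)
  -- derivative of the deformation map
  have hφ : ∀ (ε : ℝ) (x : EuclideanSpace ℝ (Fin n)),
      HasFDerivAt (fun y => y + ε • V y) (1 + ε • A x) x := by
    intro ε x
    have h1 := (hasFDerivAt_id x).add (((hVd x).hasFDerivAt).const_smul ε)
    rw [ContinuousLinearMap.one_def]; exact h1
  -- the measure identity
  have him : ∀ ε : ℝ, |ε| ≤ δ →
      (volume ((fun x => x + ε • V x) '' Ω)).toReal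
        = ∫ x in Ω, (1 + ε • A x :
            EuclideanSpace ℝ (Fin n) →L[ℝ] EuclideanSpace ℝ (Fin n)).det := by
    intro ε hε
    have h := integral_image_eq_integral_abs_det_fderiv_smul volume hΩo.measurableSet
      (fun x _ => (hφ ε x).hasFDerivWithinAt) ((hinj ε hε).injOn) (fun _ => (1 : ℝ))
    simp only [smul_eq_mul, mul_one, setIntegral_const] at h
    rw [← measureReal_def, h]
    apply setIntegral_congr_fun hΩo.measurableSet
    intro x _
    exact abs_of_pos (clm_det_pos (hkey ε hε x))
  -- finite measure
  have hΩfin : volume Ω < ⊤ := hΩb.measure_lt_top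
  -- uniform bound on the derivative of the determinant via compactness
  have hdet_cd : ContDiff ℝ (⊤ : ℕ∞)
      (fun f : EuclideanSpace ℝ (Fin n) →L[ℝ] EuclideanSpace ℝ (Fin n) => f.det) :=
    clm_det_contDiff
  have hDcont : Continuous (fderiv ℝ
      (fun f : EuclideanSpace ℝ (Fin n) →L[ℝ] EuclideanSpace ℝ (Fin n) => f.det)) :=
    hdet_cd.continuous_fderiv (by simp)
  set g : ℝ × (EuclideanSpace ℝ (Fin n) →L[ℝ] EuclideanSpace ℝ (Fin n)) → ℝ :=
    fun p => fderiv ℝ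
      (fun f : EuclideanSpace ℝ (Fin n) →L[ℝ] EuclideanSpace ℝ (Fin n) => f.det)
      (1 + p.1 • p.2) p.2 with hg
  have hgcont : Continuous g := by
    have h1 : Continuous fun p : ℝ ×
        (EuclideanSpace ℝ (Fin n) →L[ℝ] EuclideanSpace ℝ (Fin n)) =>
        (1 + p.1 • p.2 : EuclideanSpace ℝ (Fin n) →L[ℝ] EuclideanSpace ℝ (Fin n)) :=
      continuous_const.add (continuous_fst.smul continuous_snd)
    exact isBoundedBilinearMap_apply.continuous.comp ((hDcont.comp h1).prodMk continuous_snd)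
  set K : Set (ℝ × (EuclideanSpace ℝ (Fin n) →L[ℝ] EuclideanSpace ℝ (Fin n))) :=
    Icc (-δ) δ ×ˢ Metric.closedBall 0 C with hK
  have hKcomp : IsCompact K := isCompact_Icc.prod (isCompact_closedBall 0 C)
  obtain ⟨M₂, hM₂⟩ := hKcomp.exists_bound_of_continuousOn hgcont.continuousOn
  have hmemK : ∀ (ε : ℝ), |ε| ≤ δ → ∀ x, (ε, A x) ∈ K := by
    intro ε hε x
    constructor
    · exact abs_le.1 hε
    · rw [Metric.mem_closedBall, dist_zero_right]
      exact hVb x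
  -- set up the dominated differentiation theorem
  set F : ℝ → EuclideanSpace ℝ (Fin n) → ℝ := fun ε x =>
    (1 + ε • A x : EuclideanSpace ℝ (Fin n) →L[ℝ] EuclideanSpace ℝ (Fin n)).det with hF
  set F' : ℝ → EuclideanSpace ℝ (Fin n) → ℝ := fun ε x => g (ε, A x) with hF'
  have hFmeas : ∀ᶠ ε in nhds (0 : ℝ),
      AEStronglyMeasurable (F ε) (volume.restrict Ω) := by
    apply Filter.Eventually.of_forall
    intro ε
    exact Continuous.aestronglyMeasurable (f := F ε) ((ContinuousLinearMap.continuous_det).comp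
      (continuous_const.add (hAcont.const_smul ε)))
  have hF0 : F 0 = fun _ => (1 : ℝ) := by
    funext x
    simp only [hF, zero_smul, add_zero]
    simp [ContinuousLinearMap.det, ContinuousLinearMap.one_def]
  have hFint : Integrable (F 0) (volume.restrict Ω) := by
    rw [hF0]
    apply integrable_const_iff.2
    right
    exact isFiniteMeasure_restrict.2 hΩfin.ne
  have hF'meas : AEStronglyMeasurable (F' 0) (volume.restrict Ω) :=
    (hgcont.comp (continuous_const.prodMk hAcont)).aestronglyMeasurable
  have h_bound : ∀ᵐ x ∂(volume.restrict Ω), ∀ ε ∈ Metric.ball (0 : ℝ) δ,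
      ‖F' ε x‖ ≤ M₂ := by
    apply Filter.Eventually.of_forall
    intro x ε hε
    rw [Metric.mem_ball, Real.dist_eq, sub_zero] at hε
    exact hM₂ (ε, A x) (hmemK ε hε.le x)
  have h_diff : ∀ᵐ x ∂(volume.restrict Ω), ∀ ε ∈ Metric.ball (0 : ℝ) δ,
      HasDerivAt (fun t => F t x) (F' ε x) ε := by
    apply Filter.Eventually.of_forall
    intro x ε _
    exact clm_hasDerivAt_det_param (A x) ε
  obtain ⟨-, hder⟩ := hasDerivAt_integral_of_dominated_loc_of_deriv_le (Metric.ball_mem_nhds 0 hδpos) hFmeas hFint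
    hF'meas h_bound (integrable_const_iff.2 (Or.inr (isFiniteMeasure_restrict.2 hΩfin.ne))) h_diff
  -- identify the derivative
  have hF'0 : F' 0 = fun x =>
      LinearMap.trace ℝ (EuclideanSpace ℝ (Fin n)) (fderiv ℝ V x) := by
    funext x
    have h2 : F' 0 x = (fderiv ℝ
        (fun f : EuclideanSpace ℝ (Fin n) →L[ℝ] EuclideanSpace ℝ (Fin n) => f.det)
        (1 + (0 : ℝ) • A x)) (A x) := rfl
    have h3 : (1 + (0 : ℝ) • A x :
        EuclideanSpace ℝ (Fin n) →L[ℝ] EuclideanSpace ℝ (Fin n)) = 1 := by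
      ext v; simp
    rw [h2, h3]
    exact clm_fderiv_det_one (A x)
  rw [hF'0] at hder
  -- conclude via local equality of the two functions
  apply hder.congr_of_eventuallyEq
  have hmem : Metric.ball (0 : ℝ) δ ∈ nhds (0 : ℝ) := Metric.ball_mem_nhds 0 hδpos
  filter_upwards [hmem] with ε hε
  rw [Metric.mem_ball, Real.dist_eq, sub_zero] at hε
  exact him ε hε.le
end

section
/- If d_Ω is the signed distance function to the boundary of an open set Ω⊆ℝⁿ and d_Ω is differentiable at a point x∉∂Ω, then ‖∇d_Ω(x)‖ = 1 (the signed distance is an Eikonal solution wherever differentiable off the boundary). -/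
open Metric
open scoped Classical

open Filter Topology in
lemma aux_infDist_fderiv_norm_one {n : ℕ} {F : Set (EuclideanSpace ℝ (Fin n))}
    (hFc : IsClosed F) (hFne : F.Nonempty) {x : EuclideanSpace ℝ (Fin n)} (hx : x ∉ F)
    (hdiff : DifferentiableAt ℝ (fun z => infDist z F) x) :
    ‖fderiv ℝ (fun z => infDist z F) x‖ = 1 := by
  set f : EuclideanSpace ℝ (Fin n) → ℝ := fun z => infDist z F with hf
  set L := fderiv ℝ f x with hL
  have hpos : 0 < f x := (hFc.notMem_iff_infDist_pos hFne).1 hx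
  have hle : ‖L‖ ≤ 1 := by
    have := norm_fderiv_le_of_lipschitz (f := f) (x₀ := x) ℝ (lipschitz_infDist_pt F)
    simpa using this
  obtain ⟨y, hyF, hyd⟩ := hFc.exists_infDist_eq_dist hFne x
  set v := y - x with hv
  have hvnorm : ‖v‖ = f x := by
    have h' : f x = dist x y := hyd
    rw [h', dist_eq_norm, hv, ← norm_neg]; congr 1; abel
  have hseg : ∀ t ∈ Set.Ioo (0:ℝ) 1, f (x + t • v) = (1 - t) * f x := by
    intro t ht
    have h1 : f (x + t • v) ≤ (1 - t) * f x := by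
      have : f (x + t • v) ≤ dist (x + t • v) y := infDist_le_dist_of_mem hyF
      have heq : dist (x + t • v) y = (1 - t) * ‖v‖ := by
        rw [dist_eq_norm]
        have : x + t • v - y = -((1 - t) • v) := by
          rw [hv]; module
        rw [this, norm_neg, norm_smul, Real.norm_eq_abs,
          abs_of_pos (by linarith [ht.2])]
      rw [heq] at this; rw [← hvnorm]; linarith
    have h2 : (1 - t) * f x ≤ f (x + t • v) := by
      have := infDist_le_infDist_add_dist (x := x) (y := x + t • v) (s := F)
      have hdist : dist x (x + t • v) = t * ‖v‖ := by
        rw [dist_eq_norm]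
        have : x - (x + t • v) = -(t • v) := by abel
        rw [this, norm_neg, norm_smul, Real.norm_eq_abs, abs_of_pos ht.1]
      rw [hdist, hvnorm] at this
      have : f x ≤ f (x + t • v) + t * f x := this
      linarith
    linarith
  have hcurve : HasDerivAt (fun t : ℝ => x + t • v) v 0 := by
    have h1 : HasDerivAt (fun t : ℝ => t • v) ((1:ℝ) • v) 0 :=
      (hasDerivAt_id (0:ℝ)).smul_const v
    simpa using h1.const_add x
  have hline : HasDerivAt (fun t : ℝ => f (x + t • v)) (L v) 0 := by
    have h0 : HasFDerivAt f L x := hdiff.hasFDerivAt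
    have h0' : HasFDerivAt f L ((fun t : ℝ => x + t • v) 0) := by simpa using h0
    exact h0'.comp_hasDerivAt 0 hcurve
  have hslope : Tendsto (slope (fun t : ℝ => f (x + t • v)) 0) (𝓝[>] 0) (𝓝 (L v)) :=
    (hasDerivAt_iff_tendsto_slope.mp hline).mono_left
      (nhdsWithin_mono 0 (fun t ht => ne_of_gt ht))
  have hconst : Tendsto (slope (fun t : ℝ => f (x + t • v)) 0) (𝓝[>] 0) (𝓝 (-(f x))) := by
    have hev : slope (fun t : ℝ => f (x + t • v)) 0 =ᶠ[𝓝[>] (0:ℝ)] fun _ => -(f x) := by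
      filter_upwards [Ioo_mem_nhdsGT_of_mem (by norm_num : (0:ℝ) ∈ Set.Ico 0 1)] with t ht
      have h0 : f (x + (0:ℝ) • v) = f x := by simp
      rw [slope_def_field, h0, hseg t ht]
      have ht0 : t ≠ 0 := ne_of_gt ht.1
      field_simp
      ring
    exact tendsto_const_nhds.congr' hev.symm
  have hLv : L v = -(f x) := tendsto_nhds_unique hslope hconst
  have hge : f x ≤ ‖L‖ * ‖v‖ := by
    calc f x = ‖L v‖ := by rw [hLv]; simp [abs_of_pos hpos]
    _ ≤ ‖L‖ * ‖v‖ := L.le_opNorm v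
  rw [hvnorm] at hge
  have h1le : 1 ≤ ‖L‖ := by
    by_contra h
    push_neg at h
    nlinarith
  linarith

/-- wherever the signed distance function `d_Ω` to the boundary of an
open set is differentiable at a point `x ∉ ∂Ω`, its gradient has norm one (Eikonal
equation). -/
theorem signedDist_gradient_norm_one
    {n : ℕ} (Ω : Set (EuclideanSpace ℝ (Fin n)))
    (hΩo : IsOpen Ω) (hne : Ω.Nonempty) (hnec : Ωᶜ.Nonempty)
    (d : EuclideanSpace ℝ (Fin n) → ℝ)
    (hd : ∀ x, d x =
      if x ∈ Ω then infDist x (frontier Ω)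
      else if x ∈ frontier Ω then 0
      else -infDist x (frontier Ω))
    (x : EuclideanSpace ℝ (Fin n)) (hx : x ∉ frontier Ω)
    (hdiff : DifferentiableAt ℝ d x) :
    ‖gradient d x‖ = 1 := by
  have hFne : (frontier Ω).Nonempty := by
    rw [Set.nonempty_iff_ne_empty]
    intro h
    have hclopen : IsClopen Ω := isClopen_iff_frontier_eq_empty.mpr h
    rcases isClopen_iff.mp hclopen with h' | h'
    · exact hne.ne_empty h'
    · rw [h', Set.compl_univ] at hnec; exact hnec.ne_empty rfl
  set f : EuclideanSpace ℝ (Fin n) → ℝ := fun z => infDist z (frontier Ω) with hf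
  have hnorm : ‖gradient d x‖ = ‖fderiv ℝ d x‖ := by
    rw [gradient]
    exact LinearIsometryEquiv.norm_map _ _
  rw [hnorm]
  by_cases hxΩ : x ∈ Ω
  · have hev : d =ᶠ[nhds x] f := by
      filter_upwards [hΩo.mem_nhds hxΩ] with z hz
      rw [hd z, if_pos hz]
    have hdf : DifferentiableAt ℝ f x := hdiff.congr_of_eventuallyEq hev.symm
    rw [Filter.EventuallyEq.fderiv_eq hev]
    have hxF : x ∉ frontier Ω := hx
    exact aux_infDist_fderiv_norm_one isClosed_frontier hFne hxF hdf
  · have hxcl : x ∉ closure Ω := by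
      intro hcl
      exact hx ⟨hcl, by rwa [← hΩo.interior_eq] at hxΩ⟩
    have hopen : IsOpen (closure Ω)ᶜ := isClosed_closure.isOpen_compl
    have hev : d =ᶠ[nhds x] (fun z => -f z) := by
      filter_upwards [hopen.mem_nhds hxcl] with z hz
      have hz1 : z ∉ Ω := fun h => hz (subset_closure h)
      have hz2 : z ∉ frontier Ω := fun h => hz h.1
      rw [hd z, if_neg hz1, if_neg hz2]
    have hdf' : DifferentiableAt ℝ (fun z => -f z) x := hdiff.congr_of_eventuallyEq hev.symm
    have hdf : DifferentiableAt ℝ f x := by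
      have := hdf'.neg
      simpa using this
    rw [Filter.EventuallyEq.fderiv_eq hev]
    have : fderiv ℝ (fun z => -f z) x = -fderiv ℝ f x := by
      rw [fderiv_fun_neg]
    rw [this, norm_neg]
    exact aux_infDist_fderiv_norm_one isClosed_frontier hFne hx hdf
end
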